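/- Let δ ∈ (1/2, 1]. Then the supremum, over all positive integers k and all (H, L) ∈ Λ^δ(k) with λ(H > 1/2) > 0, of the ratio λ(L < 1/2) / (λ(H > 1/2) − λ(L < 1/2)) equals (1 − δ)/δ. -/

import Mathlib

/-!
Write `A = λ(H > 1/2)` and `B = λ(L < 1/2)`. Where `L < 1/2` we have `L + δ ≤ H`, and
`H ≥ δ` wherever `H > 1/2`, so `∫_{L<1/2} L ≤ ∫_{H>1/2} (H - δ)`. Condition (4) at `y = 1 - t`,
for the finitely many values `t < 1/2` of `L`, reads `(1 - t) λ(L = t) = t λ(H = 1 - t)`;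
summing over `t` gives `∫_{L<1/2} (1 - L) ≤ ∫_{H>1/2} (1 - H)`. Adding the two,
`B ≤ (1 - δ) A`, which bounds the ratio by `(1 - δ)/δ`. The bound is attained by
`H = 1, δ, 1/2` and `L = 1 - δ, 1/2, 1/2` on `[0, b)`, `[b, 1/4)`, `[1/4, ∞)`, `b = (1 - δ)/4`.
-/

open MeasureTheory
open scoped ENNReal

noncomputable section

/-- A right-continuous step function on `[0, ∞)` with finitely many steps. -/
def IsRCStep (f : ℝ → ℝ) : Prop :=
  ∃ (k : ℕ) (t : Fin (k + 1) → ℝ) (c : Fin (k + 1) → ℝ),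
    t 0 = 0 ∧ StrictMono t ∧
    (∀ i : Fin k, ∀ x ∈ Set.Ico (t i.castSucc) (t i.succ), f x = c i.castSucc) ∧
    (∀ x ∈ Set.Ici (t (Fin.last k)), f x = c (Fin.last k))

/-- The class `Λ(k)` of pairs of functions `(H, L) : [0, ∞) → [0, 1]²`. -/
def Lam (k : ℕ) (H L : ℝ → ℝ) : Prop :=
  (∀ x ∈ Set.Ici (0 : ℝ), 0 ≤ L x ∧ L x ≤ 1 / 2 ∧ 1 / 2 ≤ H x ∧ H x ≤ 1) ∧
  IsRCStep H ∧ IsRCStep L ∧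
  volume ({x | 1 / 2 < H x} ∩ Set.Ici 0) + volume ({x | L x < 1 / 2} ∩ Set.Ici 0) ≤
    (k : ℝ≥0∞) / 2 ∧
  ∀ y ∈ Set.Ioc (0 : ℝ) 1,
    ENNReal.ofReal ((1 - y) / y) *
        (volume ({x | H x = y} ∩ Set.Ici 0) + volume ({x | L x = y} ∩ Set.Ici 0)) =
      volume ({x | H x = 1 - y} ∩ Set.Ici 0) + volume ({x | L x = 1 - y} ∩ Set.Ici 0)

/-- The class `Λ^δ(k)`. -/
def LamDelta (δ : ℝ) (k : ℕ) (H L : ℝ → ℝ) : Prop :=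
  Lam k H L ∧
  {x ∈ Set.Ici (0 : ℝ) | H x ∈ Set.Ioo (1 / 2) δ} = ∅ ∧
  {x ∈ Set.Ici (0 : ℝ) | L x ∈ Set.Ioo (1 - δ) (1 / 2)} = ∅ ∧
  {x ∈ Set.Ici (0 : ℝ) | L x + δ ≤ H x} = {x ∈ Set.Ici (0 : ℝ) | L x < 1 / 2}

open Set

section ConstantOn

variable {α β : Type*} {f : α → β} {I : Set α} {c : β}

lemma preimage_inter_eq_ite_of_eqOn (h : EqOn f (fun _ => c) I) (s : Set β) [Decidable (c ∈ s)] :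
    f ⁻¹' s ∩ I = if c ∈ s then I else ∅ := by
  rw [inter_comm, h.inter_preimage_eq, preimage_const]
  split_ifs <;> simp

lemma measurableSet_preimage_inter_of_eqOn [MeasurableSpace α] (h : EqOn f (fun _ => c) I)
    (hI : MeasurableSet I) (s : Set β) : MeasurableSet (f ⁻¹' s ∩ I) := by
  classical
  rw [preimage_inter_eq_ite_of_eqOn h]
  split_ifs
  exacts [hI, .empty]

lemma measure_preimage_inter_of_eqOn [MeasurableSpace α] {μ : Measure α}
    (h : EqOn f (fun _ => c) I) (s : Set β) [Decidable (c ∈ s)] :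
    μ (f ⁻¹' s ∩ I) = if c ∈ s then μ I else 0 := by
  rw [preimage_inter_eq_ite_of_eqOn h]
  split_ifs <;> simp

end ConstantOn

section FinitelyValued

variable {α β E : Type*} {f : α → β} {s : Set β} {T : Set α} {V : Finset β}

lemma preimage_inter_eq_biUnion (hV : MapsTo f (f ⁻¹' s ∩ T) V) (hVs : ↑V ⊆ s) :
    f ⁻¹' s ∩ T = ⋃ v ∈ V, f ⁻¹' {v} ∩ T := by
  ext x
  simp only [mem_inter_iff, mem_preimage, mem_iUnion, mem_singleton_iff, exists_prop]
  constructor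
  · intro hx
    exact ⟨f x, hV hx, rfl, hx.2⟩
  · rintro ⟨v, hv, rfl, hxT⟩
    exact ⟨hVs hv, hxT⟩

variable [MeasurableSpace α] {μ : Measure α} [NormedAddCommGroup E]

lemma integrableOn_comp_of_mapsTo (hV : MapsTo f (f ⁻¹' s ∩ T) V) (hVs : ↑V ⊆ s)
    (hmeas : ∀ v ∈ V, MeasurableSet (f ⁻¹' {v} ∩ T)) (hfin : μ (f ⁻¹' s ∩ T) ≠ ∞) (g : β → E) :
    IntegrableOn (fun x => g (f x)) (f ⁻¹' s ∩ T) μ := by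
  rw [preimage_inter_eq_biUnion hV hVs] at hfin ⊢
  refine integrableOn_finset_iUnion.2 fun v hv => ?_
  have hv_fin : μ (f ⁻¹' {v} ∩ T) ≠ ∞ := ne_top_of_le_ne_top hfin
    (measure_mono (Finset.subset_set_biUnion_of_mem (f := fun v => f ⁻¹' {v} ∩ T) hv))
  exact (integrableOn_const (C := g v) hv_fin).congr_fun (fun x hx => by rw [hx.1]) (hmeas v hv)

lemma setIntegral_comp_of_mapsTo [NormedSpace ℝ E] [CompleteSpace E]
    (hV : MapsTo f (f ⁻¹' s ∩ T) V) (hVs : ↑V ⊆ s)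
    (hmeas : ∀ v ∈ V, MeasurableSet (f ⁻¹' {v} ∩ T)) (hfin : μ (f ⁻¹' s ∩ T) ≠ ∞) (g : β → E) :
    ∫ x in f ⁻¹' s ∩ T, g (f x) ∂μ = ∑ v ∈ V, μ.real (f ⁻¹' {v} ∩ T) • g v := by
  have hint := integrableOn_comp_of_mapsTo hV hVs hmeas hfin g
  rw [preimage_inter_eq_biUnion hV hVs] at hint ⊢
  rw [integral_biUnion_finset V hmeas ?_ fun v hv =>
    hint.mono_set (Finset.subset_set_biUnion_of_mem (f := fun v => f ⁻¹' {v} ∩ T) hv)]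
  · refine Finset.sum_congr rfl fun v hv => ?_
    rw [setIntegral_congr_fun (hmeas v hv) (fun x hx => by rw [hx.1]), setIntegral_const]
  · intro v _ w _ hvw
    exact ((disjoint_singleton.2 hvw).preimage f).mono inter_subset_left inter_subset_left

end FinitelyValued

namespace IsRCStep

variable {f : ℝ → ℝ}

lemma exists_cover (hf : IsRCStep f) :
    ∃ (n : ℕ) (P : Fin n → Set ℝ) (c : Fin n → ℝ), (∀ i, MeasurableSet (P i)) ∧
      (⋃ i, P i) = Ici 0 ∧ ∀ i, EqOn f (fun _ => c i) (P i) := by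
  obtain ⟨k, t, c, ht0, hmono, hico, hici⟩ := hf
  refine ⟨k + 1, fun i => Ici (t i) ∩ ⋂ (j) (_ : i < j), Iio (t j), c,
    fun i => measurableSet_Ici.inter (.iInter fun j => .iInter fun _ => measurableSet_Iio), ?_, ?_⟩
  · ext x
    simp only [mem_iUnion, mem_inter_iff, mem_Ici, mem_iInter, mem_Iio]
    constructor
    · rintro ⟨i, hti, -⟩
      exact ht0 ▸ (hmono.monotone (Fin.zero_le i)).trans hti
    · intro hx
      obtain ⟨i, hi, hmax⟩ := (Finset.univ.filter fun i => t i ≤ x).exists_max_image id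
        ⟨0, by simp [ht0, hx]⟩
      refine ⟨i, (Finset.mem_filter.1 hi).2, fun j hij => lt_of_not_ge fun hj => ?_⟩
      exact (hmax j (by simp [hj])).not_gt hij
  · intro i x hx
    simp only [mem_inter_iff, mem_Ici, mem_iInter, mem_Iio] at hx
    rcases Fin.eq_castSucc_or_eq_last i with ⟨j, rfl⟩ | rfl
    · exact hico j x ⟨hx.1, hx.2 _ Fin.castSucc_lt_succ⟩
    · exact hici x hx.1

lemma finite_image_Ici (hf : IsRCStep f) : (f '' Ici 0).Finite := by
  obtain ⟨n, P, c, -, hcover, hc⟩ := hf.exists_cover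
  refine (finite_range c).subset ?_
  rintro _ ⟨x, hx, rfl⟩
  obtain ⟨i, hi⟩ := mem_iUnion.1 (hcover ▸ hx)
  exact ⟨i, (hc i hi).symm⟩

lemma measurableSet_preimage_inter_Ici (hf : IsRCStep f) (s : Set ℝ) :
    MeasurableSet (f ⁻¹' s ∩ Ici 0) := by
  obtain ⟨n, P, c, hP, hcover, hc⟩ := hf.exists_cover
  rw [← hcover, inter_iUnion]
  exact .iUnion fun i => measurableSet_preimage_inter_of_eqOn (hc i) (hP i) s

lemma integrableOn_comp (hf : IsRCStep f) {s : Set ℝ} (hfin : volume (f ⁻¹' s ∩ Ici 0) ≠ ∞)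
    (g : ℝ → ℝ) : IntegrableOn (fun x => g (f x)) (f ⁻¹' s ∩ Ici 0) := by
  have hfinite : (f '' (f ⁻¹' s ∩ Ici 0)).Finite :=
    hf.finite_image_Ici.subset (image_mono inter_subset_right)
  refine integrableOn_comp_of_mapsTo (V := hfinite.toFinset) ?_ ?_
    (fun v _ => hf.measurableSet_preimage_inter_Ici {v}) hfin g
  · exact fun x hx => hfinite.mem_toFinset.2 (mem_image_of_mem f hx)
  · rw [hfinite.coe_toFinset]
    exact (image_mono inter_subset_left).trans (image_preimage_subset f s)

end IsRCStep

namespace Lam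

variable {k : ℕ} {H L : ℝ → ℝ}

lemma volume_H_gt_ne_top (h : Lam k H L) : volume ({x | 1 / 2 < H x} ∩ Ici 0) ≠ ∞ :=
  ne_top_of_le_ne_top (ENNReal.div_ne_top (ENNReal.natCast_ne_top k) two_ne_zero)
    (le_self_add.trans h.2.2.2.1)

lemma volume_L_lt_ne_top (h : Lam k H L) : volume ({x | L x < 1 / 2} ∩ Ici 0) ≠ ∞ :=
  ne_top_of_le_ne_top (ENNReal.div_ne_top (ENNReal.natCast_ne_top k) two_ne_zero)
    (le_add_self.trans h.2.2.2.1)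

lemma measureReal_L_mul_one_sub (h : Lam k H L) {t : ℝ} (ht0 : 0 ≤ t) (ht : t < 1 / 2) :
    volume.real ({x | L x = t} ∩ Ici 0) * (1 - t) =
      volume.real ({x | H x = 1 - t} ∩ Ici 0) * t := by
  obtain ⟨hrange, -, -, -, hsym⟩ := h
  have hL : {x | L x = 1 - t} ∩ Ici 0 = ∅ := by
    refine eq_empty_of_forall_notMem fun x ⟨hx, hx0⟩ => ?_
    have hx : L x = 1 - t := hx
    linarith [(hrange x hx0).2.1]
  have hH : {x | H x = t} ∩ Ici 0 = ∅ := by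
    refine eq_empty_of_forall_notMem fun x ⟨hx, hx0⟩ => ?_
    have hx : H x = t := hx
    linarith [(hrange x hx0).2.2.1]
  have key := congrArg ENNReal.toReal (hsym (1 - t) ⟨by linarith, by linarith⟩)
  rw [sub_sub_cancel, hL, hH, measure_empty, add_zero, zero_add,
    ENNReal.toReal_ofReal_mul _ _ (div_nonneg ht0 (by linarith))] at key
  have ht1 : 1 - t ≠ 0 := by linarith
  rw [measureReal_def, measureReal_def, ← key]
  field_simp

lemma setIntegral_one_sub_L_le (h : Lam k H L) :
    ∫ x in {x | L x < 1 / 2} ∩ Ici 0, (1 - L x) ≤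
      ∫ x in {x | 1 / 2 < H x} ∩ Ici 0, (1 - H x) := by
  obtain ⟨hrange, hH, hL, -⟩ := id h
  have hVB_fin : (L '' ({x | L x < 1 / 2} ∩ Ici 0)).Finite :=
    hL.finite_image_Ici.subset (image_mono inter_subset_right)
  set VB := hVB_fin.toFinset
  have hVB : ∀ t ∈ VB, 0 ≤ t ∧ t < 1 / 2 := by
    intro t ht
    obtain ⟨x, ⟨hxt, hx0⟩, rfl⟩ := hVB_fin.mem_toFinset.1 ht
    exact ⟨(hrange x hx0).1, hxt⟩
  set VA := VB.image (1 - ·)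
  have hsub : H ⁻¹' VA ∩ Ici 0 ⊆ {x | 1 / 2 < H x} ∩ Ici 0 := by
    rintro x ⟨hx, hx0⟩
    obtain ⟨t, ht, htx⟩ := Finset.mem_image.1 hx
    exact ⟨show 1 / 2 < H x by linarith [hVB t ht], hx0⟩
  have hA_fin := h.volume_H_gt_ne_top
  calc ∫ x in {x | L x < 1 / 2} ∩ Ici 0, (1 - L x)
      = ∑ t ∈ VB, volume.real (L ⁻¹' {t} ∩ Ici 0) • (1 - t) :=
        setIntegral_comp_of_mapsTo (s := Iio (1 / 2))
          (fun x hx => hVB_fin.mem_toFinset.2 (mem_image_of_mem L hx)) (fun t ht => (hVB t ht).2)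
          (fun v _ => hL.measurableSet_preimage_inter_Ici {v}) h.volume_L_lt_ne_top (1 - ·)
    _ = ∑ t ∈ VB, volume.real (H ⁻¹' {1 - t} ∩ Ici 0) • (1 - (1 - t)) :=
        Finset.sum_congr rfl fun t ht => by
          rw [smul_eq_mul, smul_eq_mul, sub_sub_cancel]
          exact h.measureReal_L_mul_one_sub (hVB t ht).1 (hVB t ht).2
    _ = ∑ u ∈ VA, volume.real (H ⁻¹' {u} ∩ Ici 0) • (1 - u) :=
        (Finset.sum_image (f := fun u => volume.real (H ⁻¹' {u} ∩ Ici 0) • (1 - u))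
          fun a _ b _ hab => sub_right_injective hab).symm
    _ = ∫ x in H ⁻¹' VA ∩ Ici 0, (1 - H x) :=
        (setIntegral_comp_of_mapsTo (fun x hx => hx.1) subset_rfl
          (fun v _ => hH.measurableSet_preimage_inter_Ici {v})
          (ne_top_of_le_ne_top hA_fin (measure_mono hsub)) (1 - ·)).symm
    _ ≤ ∫ x in {x | 1 / 2 < H x} ∩ Ici 0, (1 - H x) :=
        setIntegral_mono_set (hH.integrableOn_comp hA_fin (1 - ·))
          (ae_restrict_of_forall_mem (hH.measurableSet_preimage_inter_Ici _) fun x hx =>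
            sub_nonneg.2 (hrange x hx.2).2.2.2)
          hsub.eventuallyLE

end Lam

lemma LamDelta.toReal_volume_L_lt_le {δ : ℝ} {k : ℕ} {H L : ℝ → ℝ} (hδ : 1 / 2 < δ)
    (h : LamDelta δ k H L) :
    (volume ({x | L x < 1 / 2} ∩ Ici 0)).toReal ≤
      (1 - δ) * (volume ({x | 1 / 2 < H x} ∩ Ici 0)).toReal := by
  obtain ⟨hLam, hgapH, -, hjump⟩ := h
  obtain ⟨hrange, hH, hL, -⟩ := id hLam
  have hsymm := hLam.setIntegral_one_sub_L_le
  set SA := {x | 1 / 2 < H x} ∩ Ici 0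
  set SB := {x | L x < 1 / 2} ∩ Ici 0
  have hjump' : ∀ x ∈ SB, L x + δ ≤ H x := fun x hx =>
    ((Set.ext_iff.1 hjump x).2 ⟨hx.2, hx.1⟩).2
  have hgap' : ∀ x ∈ SA, δ ≤ H x := fun x hx =>
    not_lt.1 fun hlt => (eq_empty_iff_forall_notMem.1 hgapH x) ⟨hx.2, hx.1, hlt⟩
  have hBA : SB ⊆ SA := fun x hx =>
    ⟨show 1 / 2 < H x by linarith [hjump' x hx, (hrange x hx.2).1], hx.2⟩
  have iH : ∀ g : ℝ → ℝ, IntegrableOn (fun x => g (H x)) SA :=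
    hH.integrableOn_comp (s := Ioi (1 / 2)) hLam.volume_H_gt_ne_top
  have iL : ∀ g : ℝ → ℝ, IntegrableOn (fun x => g (L x)) SB :=
    hL.integrableOn_comp (s := Iio (1 / 2)) hLam.volume_L_lt_ne_top
  have hmA : MeasurableSet SA := hH.measurableSet_preimage_inter_Ici (Ioi (1 / 2))
  have hmB : MeasurableSet SB := hL.measurableSet_preimage_inter_Ici (Iio (1 / 2))
  have hL_le : ∫ x in SB, L x ≤ ∫ x in SA, (H x - δ) :=
    calc ∫ x in SB, L x ≤ ∫ x in SB, (H x - δ) :=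
          setIntegral_mono_on (iL fun u => u) ((iH (· - δ)).mono_set hBA) hmB fun x hx => by
            linarith [hjump' x hx]
      _ ≤ ∫ x in SA, (H x - δ) :=
          setIntegral_mono_set (iH (· - δ))
            (ae_restrict_of_forall_mem hmA fun x hx => sub_nonneg.2 (hgap' x hx)) hBA.eventuallyLE
  have hB_eq : volume.real SB = (∫ x in SB, (1 - L x)) + ∫ x in SB, L x := by
    rw [← integral_add (iL (1 - ·)) (iL fun u => u)]
    simp
  have hA_eq : (1 - δ) * volume.real SA = (∫ x in SA, (1 - H x)) + ∫ x in SA, (H x - δ) := by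
    rw [← integral_add (iH (1 - ·)) (iH (· - δ))]
    simp [mul_comm]
  rw [← measureReal_def, ← measureReal_def]
  linarith

def threeStep (a b c₁ c₂ c₃ : ℝ) (x : ℝ) : ℝ :=
  if x < a then c₁ else if x < b then c₂ else c₃

section ThreeStep

variable {a b : ℝ} (c₁ c₂ c₃ : ℝ)

lemma isRCStep_threeStep (ha : 0 ≤ a) (hab : a < b) : IsRCStep (threeStep a b c₁ c₂ c₃) := by
  rcases ha.eq_or_lt with rfl | ha
  · refine ⟨1, ![0, b], ![c₂, c₃], rfl, ?_, fun i x hx => ?_, fun x hx => ?_⟩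
    · simpa [Fin.strictMono_iff_lt_succ] using hab
    · fin_cases i
      simp at hx ⊢
      simp [threeStep, hx.1.not_gt, hx.2]
    · have hx : b ≤ x := hx
      simp [threeStep, (hab.trans_le hx).not_gt, hx.not_gt]
  · refine ⟨2, ![0, a, b], ![c₁, c₂, c₃], rfl, ?_, fun i x hx => ?_, fun x hx => ?_⟩
    · rw [Fin.strictMono_iff_lt_succ]
      intro i
      fin_cases i <;> simpa
    · fin_cases i <;> simp at hx ⊢ <;> simp [threeStep, hx.1.not_gt, hx.2]
    · have hx : b ≤ x := hx
      simp [threeStep, (hab.trans_le hx).not_gt, hx.not_gt]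

open Classical in
lemma volume_threeStep_preimage_inter_Ici (ha : 0 ≤ a) (hab : a ≤ b) (s : Set ℝ) :
    volume (threeStep a b c₁ c₂ c₃ ⁻¹' s ∩ Ici 0) =
      (if c₁ ∈ s then ENNReal.ofReal a else 0) + (if c₂ ∈ s then ENNReal.ofReal (b - a) else 0) +
        (if c₃ ∈ s then ∞ else 0) := by
  set f := threeStep a b c₁ c₂ c₃
  have h₁ : EqOn f (fun _ => c₁) (Ico 0 a) := fun x hx => if_pos hx.2
  have h₂ : EqOn f (fun _ => c₂) (Ico a b) := fun x hx => by
    simp [f, threeStep, hx.1.not_gt, hx.2]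
  have h₃ : EqOn f (fun _ => c₃) (Ici b) := fun x (hx : b ≤ x) => by
    simp [f, threeStep, (hab.trans hx).not_gt, hx.not_gt]
  have hcover : Ici (0 : ℝ) = Ico 0 a ∪ Ico a b ∪ Ici b := by
    rw [Ico_union_Ico_eq_Ico ha hab, Ico_union_Ici_eq_Ici (ha.trans hab)]
  rw [hcover, inter_union_distrib_left, inter_union_distrib_left,
    measure_union _ (measurableSet_preimage_inter_of_eqOn h₃ measurableSet_Ici s),
    measure_union _ (measurableSet_preimage_inter_of_eqOn h₂ measurableSet_Ico s),
    measure_preimage_inter_of_eqOn h₁, measure_preimage_inter_of_eqOn h₂,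
    measure_preimage_inter_of_eqOn h₃, Real.volume_Ico, Real.volume_Ico, Real.volume_Ici,
    sub_zero]
  · exact Ico_disjoint_Ico_same.mono inter_subset_right inter_subset_right
  · rw [← inter_union_distrib_left, Ico_union_Ico_eq_Ico ha hab]
    exact ((Iio_disjoint_Ici le_rfl).mono_left Ico_subset_Iio_self).mono inter_subset_right
      inter_subset_right

lemma volume_threeStep_eq_inter_Ici (ha : 0 ≤ a) (hab : a ≤ b) (y : ℝ) :
    volume ({x | threeStep a b c₁ c₂ c₃ x = y} ∩ Ici 0) =
      (if c₁ = y then ENNReal.ofReal a else 0) + (if c₂ = y then ENNReal.ofReal (b - a) else 0) +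
        (if c₃ = y then ∞ else 0) := by
  rw [show {x | threeStep a b c₁ c₂ c₃ x = y} = threeStep a b c₁ c₂ c₃ ⁻¹' {y} from rfl,
    volume_threeStep_preimage_inter_Ici c₁ c₂ c₃ ha hab]
  simp only [mem_singleton_iff]

end ThreeStep

def extremalH (δ : ℝ) : ℝ → ℝ := threeStep ((1 - δ) / 4) (1 / 4) 1 δ (1 / 2)

def extremalL (δ : ℝ) : ℝ → ℝ := threeStep ((1 - δ) / 4) (1 / 4) (1 - δ) (1 / 2) (1 / 2)

section Extremal

variable {δ : ℝ}

lemma volume_extremalH_gt (hδ : δ ∈ Ioc (1 / 2 : ℝ) 1) :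
    volume ({x | 1 / 2 < extremalH δ x} ∩ Ici 0) = ENNReal.ofReal (1 / 4) := by
  obtain ⟨hδ₁, hδ₂⟩ := hδ
  have := volume_threeStep_preimage_inter_Ici 1 δ (1 / 2) (by linarith : 0 ≤ (1 - δ) / 4)
    (by linarith : (1 - δ) / 4 ≤ 1 / 4) (Ioi (1 / 2))
  simp only [mem_Ioi, lt_self_iff_false, if_false, add_zero] at this
  rw [if_pos (by norm_num), if_pos hδ₁, ← ENNReal.ofReal_add (by linarith) (by linarith)] at this
  rwa [show (1 - δ) / 4 + (1 / 4 - (1 - δ) / 4) = 1 / 4 by ring] at this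

lemma volume_extremalL_lt (hδ : δ ∈ Ioc (1 / 2 : ℝ) 1) :
    volume ({x | extremalL δ x < 1 / 2} ∩ Ici 0) = ENNReal.ofReal ((1 - δ) / 4) := by
  obtain ⟨hδ₁, hδ₂⟩ := hδ
  have := volume_threeStep_preimage_inter_Ici (1 - δ) (1 / 2) (1 / 2)
    (by linarith : 0 ≤ (1 - δ) / 4) (by linarith : (1 - δ) / 4 ≤ 1 / 4) (Iio (1 / 2))
  simp only [mem_Iio, lt_self_iff_false, if_false, add_zero] at this
  rw [if_pos (by linarith)] at this
  exact this

lemma extremal_symm (hδ : δ ∈ Ioc (1 / 2 : ℝ) 1) (y : ℝ) (hy : y ∈ Ioc 0 1) :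
    ENNReal.ofReal ((1 - y) / y) *
        (volume ({x | extremalH δ x = y} ∩ Ici 0) + volume ({x | extremalL δ x = y} ∩ Ici 0)) =
      volume ({x | extremalH δ x = 1 - y} ∩ Ici 0) +
        volume ({x | extremalL δ x = 1 - y} ∩ Ici 0) := by
  obtain ⟨hδ₁, hδ₂⟩ := hδ
  obtain ⟨hy₀, hy₁⟩ := hy
  obtain rfl | hy₂ := eq_or_ne y (1 / 2)
  · norm_num
  have hb₀ : 0 ≤ (1 - δ) / 4 := by linarith
  have hb₁ : (1 - δ) / 4 ≤ 1 / 4 := by linarith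
  simp only [extremalH, extremalL, volume_threeStep_eq_inter_Ici _ _ _ hb₀ hb₁]
  have h₁ : (1 : ℝ) / 2 ≠ 1 - y := by contrapose! hy₂; linarith
  have h₂ : (1 : ℝ) ≠ 1 - y := by contrapose! hy₀; linarith
  simp only [hy₂.symm, h₁, h₂, if_false, add_zero, zero_add]
  rcases eq_or_ne y 1 with rfl | hy₃
  · split_ifs <;> simp_all
  rcases eq_or_ne δ y with rfl | hyδ
  · have h₃ : δ ≠ 1 - δ := by contrapose! hy₂; linarith
    simp only [hy₃.symm, h₃, h₃.symm, if_true, if_false, zero_add, add_zero]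
    rw [← ENNReal.ofReal_mul (div_nonneg (by linarith) hy₀.le)]
    congr 1
    field_simp
    ring
  rcases eq_or_ne (1 - δ) y with rfl | hyδ'
  · have h₃ : δ ≠ 1 - δ := by contrapose! hy₂; linarith
    simp only [sub_sub_cancel, hy₃.symm, h₃, h₃.symm, if_true, if_false, zero_add, add_zero]
    rw [← ENNReal.ofReal_mul (by positivity)]
    congr 1
    field_simp
    ring
  have h₃ : δ ≠ 1 - y := by contrapose! hyδ'; linarith
  have h₄ : 1 - δ ≠ 1 - y := by contrapose! hyδ; linarith
  simp [hy₃.symm, hyδ, hyδ', h₃, h₄]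

lemma lamDelta_extremal (hδ : δ ∈ Ioc (1 / 2 : ℝ) 1) :
    LamDelta δ 1 (extremalH δ) (extremalL δ) := by
  obtain ⟨hδ₁, hδ₂⟩ := hδ
  have hb₀ : 0 ≤ (1 - δ) / 4 := by linarith
  refine ⟨⟨fun x _ => ?_, isRCStep_threeStep _ _ _ hb₀ (by linarith),
    isRCStep_threeStep _ _ _ hb₀ (by linarith), ?_, extremal_symm ⟨hδ₁, hδ₂⟩⟩, ?_, ?_, ?_⟩
  · simp only [extremalH, extremalL, threeStep]
    split_ifs <;> refine ⟨?_, ?_, ?_, ?_⟩ <;> linarith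
  · rw [volume_extremalH_gt ⟨hδ₁, hδ₂⟩, volume_extremalL_lt ⟨hδ₁, hδ₂⟩,
      ← ENNReal.ofReal_add (by norm_num) hb₀]
    calc ENNReal.ofReal (1 / 4 + (1 - δ) / 4) ≤ ENNReal.ofReal (1 / 2) :=
          ENNReal.ofReal_le_ofReal (by linarith)
      _ = ((1 : ℕ) : ℝ≥0∞) / 2 := by
          rw [ENNReal.ofReal_div_of_pos two_pos]
          simp
  · refine eq_empty_of_forall_notMem fun x ⟨_, h₁, h₂⟩ => ?_
    simp only [extremalH, threeStep] at h₁ h₂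
    split_ifs at h₁ h₂ <;> linarith
  · refine eq_empty_of_forall_notMem fun x ⟨_, h₁, h₂⟩ => ?_
    simp only [extremalL, threeStep] at h₁ h₂
    split_ifs at h₁ h₂ <;> linarith
  · ext x
    simp only [mem_ofPred_eq, extremalH, extremalL, threeStep]
    split_ifs <;> constructor <;> rintro ⟨hx, h⟩ <;> refine ⟨hx, ?_⟩ <;> linarith

end Extremal

theorem sup_ratio_eq (δ : ℝ) (hδ : δ ∈ Set.Ioc (1 / 2 : ℝ) 1) :
    sSup {r : ℝ | ∃ (k : ℕ) (H L : ℝ → ℝ), 1 ≤ k ∧ LamDelta δ k H L ∧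
        0 < (volume ({x | 1 / 2 < H x} ∩ Set.Ici 0)).toReal ∧
        r = (volume ({x | L x < 1 / 2} ∩ Set.Ici 0)).toReal /
          ((volume ({x | 1 / 2 < H x} ∩ Set.Ici 0)).toReal -
            (volume ({x | L x < 1 / 2} ∩ Set.Ici 0)).toReal)} =
      (1 - δ) / δ := by
  have hδ₀ : 0 < δ := by linarith [hδ.1]
  refine IsGreatest.csSup_eq
    ⟨⟨1, extremalH δ, extremalL δ, le_rfl, lamDelta_extremal hδ, ?_, ?_⟩, ?_⟩
  · rw [volume_extremalH_gt hδ, ENNReal.toReal_ofReal (by norm_num)]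
    norm_num
  · rw [volume_extremalH_gt hδ, volume_extremalL_lt hδ,
      ENNReal.toReal_ofReal (by linarith [hδ.2]), ENNReal.toReal_ofReal (by norm_num),
      show (1 : ℝ) / 4 - (1 - δ) / 4 = δ / 4 by ring]
    field_simp
  · rintro r ⟨k, H, L, -, h, hA, rfl⟩
    have hB := h.toReal_volume_L_lt_le hδ.1
    rw [div_le_div_iff₀ (by nlinarith) hδ₀]
    nlinarith
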